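/- arXiv:1811.08109 — 8 statements merged into one kernel-verified Lean document; each statement's English description precedes it below -/
import Mathlib

section
/- Let E and F be real inner product spaces, let n ≥ 1, and let G : Fin n → E → F be a mean-square L-Lipschitz family with mean Ḡ, i.e. (1/n) ∑_{i : Fin n} ‖G i x − G i y‖² ≤ L² ‖x − y‖² for all x, y ∈ E, where Ḡ x = (1/n) ∑_{i : Fin n} G i x. Then for every x, y ∈ E, every v ∈ F, and every batch size b ≥ 1, the average over all tuples s : Fin b → Fin n of ‖(1/b) ∑_{j : Fin b} (G (s j) x − G (s j) y) + v − Ḡ x‖² is at most ‖v − Ḡ y‖² + (L²/b) ‖x − y‖². (One step of the SPIDER variance recursion, the inductive step in the proof of Lemma 3, specialized to Euclidean space where parallel transport is the identity.) -/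
/-!
With `D i = G i x - G i y` and its centred version `W i = D i - D̄`, the sampled vector is
`∑ j, W (s j) / b + (v - Ḡ y)`. Over independent uniform draws of a centred family the cross
terms average out, so the mean square is `‖v - Ḡ y‖² + (1/b) · (1/n) ∑ i, ‖W i‖²`, and this
variance is at most the second moment `(1/n) ∑ i, ‖D i‖² ≤ L² ‖x - y‖²`.
-/

open Finset RealInnerProductSpace

section

variable {F : Type*} [NormedAddCommGroup F] [InnerProductSpace ℝ F] {ι : Type*} [Fintype ι]

lemma sum_norm_add_const_sq (Z : ι → F) (c : F) :
    ∑ i, ‖Z i + c‖ ^ 2 = ∑ i, ‖Z i‖ ^ 2 + 2 * ⟪∑ i, Z i, c⟫ + Fintype.card ι * ‖c‖ ^ 2 := by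
  simp only [norm_add_sq_real, sum_add_distrib, sum_inner, mul_sum, sum_const, card_univ,
    nsmul_eq_mul]

lemma sum_sub_mean_eq_zero [Nonempty ι] (D : ι → F) :
    ∑ i, (D i - (1 / (Fintype.card ι : ℝ)) • ∑ k, D k) = 0 := by
  rw [sum_sub_distrib, sum_const, card_univ, ← Nat.cast_smul_eq_nsmul ℝ, smul_smul,
    mul_one_div_cancel (by positivity), one_smul, sub_self]

lemma sum_norm_sub_mean_sq_le (D : ι → F) :
    ∑ i, ‖D i - (1 / (Fintype.card ι : ℝ)) • ∑ k, D k‖ ^ 2 ≤ ∑ i, ‖D i‖ ^ 2 := by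
  set N : ℝ := (Fintype.card ι : ℝ)
  set μ : F := (1 / N) • ∑ k, D k
  rcases eq_or_ne N 0 with hN | hN
  · simp [μ, hN]
  have hsum : ∑ k, D k = N • μ := by rw [smul_smul, mul_one_div_cancel hN, one_smul]
  have hexpand := sum_norm_add_const_sq D (-μ)
  simp only [← sub_eq_add_neg, norm_neg, inner_neg_right, hsum, real_inner_smul_left,
    real_inner_self_eq_norm_sq] at hexpand
  rw [hexpand]
  have : 0 ≤ N * ‖μ‖ ^ 2 := by positivity
  linarith

lemma inv_card_smul_sum_eq_sum_sub_add {κ : Type*} [Fintype κ] [Nonempty κ] (f : κ → F) (m : F) :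
    (1 / (Fintype.card κ : ℝ)) • ∑ j, f j = ∑ j, (1 / (Fintype.card κ : ℝ)) • (f j - m) + m := by
  rw [← smul_sum, sum_sub_distrib, sum_const, card_univ, smul_sub, ← Nat.cast_smul_eq_nsmul ℝ,
    smul_smul, one_div_mul_cancel (by positivity), one_smul, sub_add_cancel]

lemma sum_norm_sum_comp_add_sq [Nonempty ι] {Z : ι → F} (hZ : ∑ i, Z i = 0) (b : ℕ) (c : F) :
    ∑ s : Fin b → ι, ‖∑ j, Z (s j) + c‖ ^ 2
      = (Fintype.card ι : ℝ) ^ b * (‖c‖ ^ 2 + b / Fintype.card ι * ∑ i, ‖Z i‖ ^ 2) := by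
  induction b generalizing c with
  | zero => simp
  | succ b ih =>
    have hN : (Fintype.card ι : ℝ) ≠ 0 := by positivity
    -- split off the first draw: the remaining `b` draws see the constant `Z (s 0) + c`
    rw [← (Fin.consEquiv fun _ => ι).sum_comp, Fintype.sum_prod_type]
    simp only [Fin.consEquiv_apply, Fin.sum_univ_succ, Fin.cons_zero, Fin.cons_succ]
    simp_rw [add_comm (Z _), add_assoc, ih, ← mul_sum, sum_add_distrib]
    rw [sum_norm_add_const_sq, hZ, inner_zero_left, sum_const, card_univ, nsmul_eq_mul]
    field_simp
    push_cast
    ring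

end

theorem stmt_2_general {E F : Type*} [NormedAddCommGroup E] [InnerProductSpace ℝ E]
    [NormedAddCommGroup F] [InnerProductSpace ℝ F]
    (n : ℕ) (hn : 1 ≤ n) (L : ℝ) (G : Fin n → E → F)
    (hlip : ∀ x y : E,
      (1 / (n : ℝ)) * ∑ i : Fin n, ‖G i x - G i y‖ ^ 2 ≤ L ^ 2 * ‖x - y‖ ^ 2)
    (x y : E) (v : F) (b : ℕ) (hb : 1 ≤ b) :
    (1 / (n : ℝ) ^ b) *
        ∑ s : Fin b → Fin n,
          ‖((1 / (b : ℝ)) • ∑ j : Fin b, (G (s j) x - G (s j) y)) + v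
              - (1 / (n : ℝ)) • ∑ i : Fin n, G i x‖ ^ 2
      ≤ ‖v - (1 / (n : ℝ)) • ∑ i : Fin n, G i y‖ ^ 2
          + (L ^ 2 / (b : ℝ)) * ‖x - y‖ ^ 2 := by
  have : NeZero n := ⟨by omega⟩
  have : NeZero b := ⟨by omega⟩
  set D : Fin n → F := fun i => G i x - G i y
  set W : Fin n → F := fun i => D i - (1 / (n : ℝ)) • ∑ k, D k
  set c := v - (1 / (n : ℝ)) • ∑ i, G i y
  have hW : ∑ i, W i = 0 := by simpa only [Fintype.card_fin] using sum_sub_mean_eq_zero D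
  have hvec (s : Fin b → Fin n) :
      (1 / (b : ℝ)) • ∑ j, (G (s j) x - G (s j) y) + v - (1 / (n : ℝ)) • ∑ i, G i x
        = ∑ j, (1 / (b : ℝ)) • W (s j) + c := by
    have := inv_card_smul_sum_eq_sum_sub_add (fun j => D (s j)) ((1 / (n : ℝ)) • ∑ k, D k)
    rw [Fintype.card_fin] at this
    rw [this]
    simp only [D, W, c, sum_sub_distrib, smul_sub]
    abel
  have hvar : 1 / (n : ℝ) * ∑ i, ‖W i‖ ^ 2 ≤ L ^ 2 * ‖x - y‖ ^ 2 := by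
    refine le_trans ?_ (hlip x y)
    gcongr 1 / _ * ?_
    simpa only [Fintype.card_fin] using sum_norm_sub_mean_sq_le D
  simp_rw [hvec]
  have hW' : ∑ i, (1 / (b : ℝ)) • W i = 0 := by rw [← smul_sum, hW, smul_zero]
  rw [sum_norm_sum_comp_add_sq hW', Fintype.card_fin, one_div, inv_mul_cancel_left₀ (by positivity)]
  calc ‖c‖ ^ 2 + b / n * ∑ i, ‖(1 / (b : ℝ)) • W i‖ ^ 2
      = ‖c‖ ^ 2 + 1 / b * (1 / n * ∑ i, ‖W i‖ ^ 2) := by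
        simp only [norm_smul, mul_pow, ← mul_sum, norm_div, norm_one, RCLike.norm_natCast]
        field_simp
    _ ≤ ‖c‖ ^ 2 + 1 / b * (L ^ 2 * ‖x - y‖ ^ 2) := by gcongr
    _ = ‖c‖ ^ 2 + L ^ 2 / b * ‖x - y‖ ^ 2 := by ring

/-- One step of the SPIDER variance recursion in Euclidean space: for a
mean-square `L`-Lipschitz family `G` with mean `Ḡ`, the average over all
tuples `s : Fin b → Fin n` of
`‖(1/b) ∑ j, (G (s j) x − G (s j) y) + v − Ḡ x‖²` is at most
`‖v − Ḡ y‖² + (L²/b) ‖x − y‖²`. -/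
theorem stmt_2 {E F : Type*} [NormedAddCommGroup E] [InnerProductSpace ℝ E]
    [NormedAddCommGroup F] [InnerProductSpace ℝ F]
    (n : ℕ) (hn : 1 ≤ n) (L : ℝ) (hL : 0 ≤ L) (G : Fin n → E → F)
    (hlip : ∀ x y : E,
      (1 / (n : ℝ)) * ∑ i : Fin n, ‖G i x - G i y‖ ^ 2 ≤ L ^ 2 * ‖x - y‖ ^ 2)
    (x y : E) (v : F) (b : ℕ) (hb : 1 ≤ b) :
    (1 / (n : ℝ) ^ b) *
        ∑ s : Fin b → Fin n,
          ‖((1 / (b : ℝ)) • ∑ j : Fin b, (G (s j) x - G (s j) y)) + v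
              - (1 / (n : ℝ)) • ∑ i : Fin n, G i x‖ ^ 2
      ≤ ‖v - (1 / (n : ℝ)) • ∑ i : Fin n, G i y‖ ^ 2
          + (L ^ 2 / (b : ℝ)) * ‖x - y‖ ^ 2 :=
  stmt_2_general n hn L G hlip x y v b hb
end

section
/- Let E and F be real inner product spaces, let n ≥ 1, and let G : Fin n → E → F be a mean-square L-Lipschitz family with mean Ḡ. Fix K ≥ 0, a batch size b ≥ 1, points x : ℕ → E, and an initial estimate w ∈ F. For each sample sequence s : Fin K → (Fin b → Fin n), define v : ℕ → F by v 0 = w and, for k < K, v (k+1) = (1/b) ∑_{j : Fin b} (G (s k j) (x (k+1)) − G (s k j) (x k)) + v k. Then the average over all sample sequences s (i.e. (1/(n^b)^K) times the sum over all s) of ‖v K − Ḡ (x K)‖² is at most ‖w − Ḡ (x 0)‖² + (L²/b) ∑_{k=0}^{K−1} ‖x (k+1) − x k‖². (Lemma 3 of the paper — the telescoped SPIDER gradient-estimation error bound — specialized to Euclidean space with deterministic iterates, matching the conditional statement of Lemma 1.) -/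
/-!
At step `k` the error `v s k - Ḡ (x k)` moves by the mini-batch mean of the increments
`D i = G i (x (k+1)) - G i (x k)` minus their mean, and the `k`-th batch is drawn independently of
the error accumulated so far. Averaging over that batch alone kills the cross term, and a
with-replacement batch of size `b` has `1/b` times the population variance of `D`, which is at most
its mean square `(1/n) ∑ ‖D i‖² ≤ L² ‖x (k+1) - x k‖²`. Summing over `k` telescopes.
-/

section

open Finset Function

variable {F : Type*} [SeminormedAddCommGroup F] [InnerProductSpace ℝ F]

section Sampling

variable {ι : Type*} [Fintype ι]

theorem sum_norm_add_sq_of_sum_eq_zero {A : ι → F} (hA : ∑ i, A i = 0) (u : F) :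
    ∑ i, ‖A i + u‖ ^ 2 = Fintype.card ι * ‖u‖ ^ 2 + ∑ i, ‖A i‖ ^ 2 := by
  simp only [norm_add_sq_real, sum_add_distrib, ← mul_sum, ← sum_inner, hA, inner_zero_left,
    mul_zero, add_zero, sum_const, card_univ, nsmul_eq_mul]
  ring

theorem sum_sub_inv_card_smul_sum_eq_zero (D : ι → F) :
    ∑ i, (D i - (Fintype.card ι : ℝ)⁻¹ • ∑ j, D j) = 0 := by
  rcases isEmpty_or_nonempty ι with hι | hι
  · simp
  · rw [sum_sub_distrib, sum_const, card_univ, ← Nat.cast_smul_eq_nsmul ℝ,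
      smul_inv_smul₀ (by positivity), sub_self]

theorem sum_norm_sub_inv_card_smul_sum_sq_le (D : ι → F) :
    ∑ i, ‖D i - (Fintype.card ι : ℝ)⁻¹ • ∑ j, D j‖ ^ 2 ≤ ∑ i, ‖D i‖ ^ 2 := by
  have h := sum_norm_add_sq_of_sum_eq_zero (sum_sub_inv_card_smul_sum_eq_zero D)
    ((Fintype.card ι : ℝ)⁻¹ • ∑ j, D j)
  simp only [sub_add_cancel] at h
  rw [h]
  exact le_add_of_nonneg_left (by positivity)

theorem sum_pi_norm_sum_comp_add_sq [Nonempty ι] {A : ι → F} (hA : ∑ i, A i = 0) (c : F)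
    (b : ℕ) :
    ∑ t : Fin b → ι, ‖∑ j, A (t j) + c‖ ^ 2
      = Fintype.card ι ^ b * (‖c‖ ^ 2 + b * ((Fintype.card ι : ℝ)⁻¹ * ∑ i, ‖A i‖ ^ 2)) := by
  induction b with
  | zero => simp
  | succ b ih =>
    have hcons : ∀ (y : ι) (p : Fin b → ι),
        ‖∑ j, A ((Fin.cons y p : Fin (b + 1) → ι) j) + c‖ ^ 2 = ‖A y + (∑ j, A (p j) + c)‖ ^ 2 := by
      intro y p
      rw [Fin.sum_univ_succ, add_assoc]
      simp only [Fin.cons_zero, Fin.cons_succ]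
    rw [← Fintype.sum_equiv (Fin.consEquiv fun _ => ι) _ _ fun _ => rfl, Fintype.sum_prod_type,
      sum_comm]
    simp only [Fin.consEquiv_apply, hcons, sum_norm_add_sq_of_sum_eq_zero hA, sum_add_distrib,
      ← mul_sum, ih, sum_const, card_univ, Fintype.card_fun, Fintype.card_fin, nsmul_eq_mul]
    have : (Fintype.card ι : ℝ) ≠ 0 := by positivity
    field_simp
    push_cast
    ring

theorem sum_pi_norm_batch_mean_sub_mean_add_sq_le [Nonempty ι] {b : ℕ} (hb : b ≠ 0) (D : ι → F)
    (e : F) :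
    ∑ t : Fin b → ι, ‖(b : ℝ)⁻¹ • ∑ j, D (t j) - (Fintype.card ι : ℝ)⁻¹ • ∑ i, D i + e‖ ^ 2
      ≤ Fintype.card ι ^ b * (‖e‖ ^ 2 + (b : ℝ)⁻¹ * ((Fintype.card ι : ℝ)⁻¹ * ∑ i, ‖D i‖ ^ 2)) := by
  set m := (Fintype.card ι : ℝ)⁻¹ • ∑ i, D i
  have hb' : (b : ℝ) ≠ 0 := by exact_mod_cast hb
  have hrescale : ∀ t : Fin b → ι, (b : ℝ)⁻¹ • ∑ j, D (t j) - m + e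
      = (b : ℝ)⁻¹ • (∑ j, (D (t j) - m) + (b : ℝ) • e) := by
    intro t
    rw [sum_sub_distrib, sum_const, card_univ, Fintype.card_fin, ← Nat.cast_smul_eq_nsmul ℝ,
      smul_add, smul_sub, inv_smul_smul₀ hb', inv_smul_smul₀ hb']
  simp only [hrescale, norm_smul, mul_pow, norm_inv, Real.norm_natCast, ← mul_sum]
  rw [sum_pi_norm_sum_comp_add_sq (sum_sub_inv_card_smul_sum_eq_zero D), norm_smul,
    Real.norm_natCast, mul_pow]
  have hvar := sum_norm_sub_inv_card_smul_sum_sq_le D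
  calc ((b : ℝ)⁻¹) ^ 2 * (Fintype.card ι ^ b * ((b : ℝ) ^ 2 * ‖e‖ ^ 2
        + b * ((Fintype.card ι : ℝ)⁻¹ * ∑ i, ‖D i - m‖ ^ 2)))
      = Fintype.card ι ^ b * (‖e‖ ^ 2
          + (b : ℝ)⁻¹ * ((Fintype.card ι : ℝ)⁻¹ * ∑ i, ‖D i - m‖ ^ 2)) := by
        field_simp
    _ ≤ _ := by gcongr

end Sampling

theorem Fintype.sum_sum_update {κ T M : Type*} [Fintype κ] [DecidableEq κ] [Fintype T]
    [AddCommMonoid M] (g : (κ → T) → M) (k : κ) :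
    ∑ s, ∑ t, g (update s k t) = Fintype.card T • ∑ s, g s := by
  let φ : Equiv.Perm ((κ → T) × T) :=
    Involutive.toPerm (fun p => (update p.1 k p.2, p.1 k)) fun p => by simp
  calc ∑ s, ∑ t, g (update s k t) = ∑ p, g (φ p).1 := by rw [Fintype.sum_prod_type]; rfl
    _ = ∑ p : (κ → T) × T, g p.1 := Equiv.sum_comp φ fun p => g p.1
    _ = Fintype.card T • ∑ s, g s := by simp [Fintype.sum_prod_type, sum_const, smul_sum]

section Spider

variable {E : Type*} {n b K : ℕ}

def MeanSqLipschitzWith [SeminormedAddCommGroup E] (L : ℝ) (G : Fin n → E → F) : Prop :=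
  ∀ x y : E, (1 / (n : ℝ)) * ∑ i : Fin n, ‖G i x - G i y‖ ^ 2 ≤ L ^ 2 * ‖x - y‖ ^ 2

def IsSpiderEstimator (G : Fin n → E → F) (x : ℕ → E) (w : F)
    (v : (Fin K → Fin b → Fin n) → ℕ → F) : Prop :=
  (∀ s, v s 0 = w) ∧
    ∀ s, ∀ k, ∀ hk : k < K,
      v s (k + 1) =
        ((1 / (b : ℝ)) • ∑ j : Fin b,
            (G (s ⟨k, hk⟩ j) (x (k + 1)) - G (s ⟨k, hk⟩ j) (x k))) + v s k

variable {G : Fin n → E → F} {x : ℕ → E} {w : F} {v : (Fin K → Fin b → Fin n) → ℕ → F}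

theorem spider_update_eq (hv : IsSpiderEstimator G x w v)
    (s : Fin K → Fin b → Fin n) (k : Fin K) (t : Fin b → Fin n) :
    ∀ j ≤ (k : ℕ), v (update s k t) j = v s j := by
  intro j
  induction j with
  | zero => simp [hv.1]
  | succ j ih =>
    intro hj
    have hjK : j < K := by omega
    have hjk : (⟨j, hjK⟩ : Fin K) ≠ k := Fin.ne_of_val_ne (show j ≠ k by omega)
    rw [hv.2 _ j hjK, hv.2 s j hjK, ih (by omega), update_of_ne hjk]

theorem sum_norm_spider_sub_mean_succ_le [SeminormedAddCommGroup E] (hn : 1 ≤ n) (hb : 1 ≤ b)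
    {L : ℝ} (hG : MeanSqLipschitzWith L G) (hv : IsSpiderEstimator G x w v) (k : ℕ) (hk : k < K) :
    ∑ s, ‖v s (k + 1) - (1 / (n : ℝ)) • ∑ i, G i (x (k + 1))‖ ^ 2
      ≤ ∑ s, ‖v s k - (1 / (n : ℝ)) • ∑ i, G i (x k)‖ ^ 2
        + ((n : ℝ) ^ b) ^ K * (L ^ 2 / b * ‖x (k + 1) - x k‖ ^ 2) := by
  have : Nonempty (Fin n) := ⟨⟨0, hn⟩⟩
  set e := fun s => v s k - (1 / (n : ℝ)) • ∑ i, G i (x k)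
  set D := fun i => G i (x (k + 1)) - G i (x k)
  set c := L ^ 2 / b * ‖x (k + 1) - x k‖ ^ 2
  have hsplit : ∀ s, v s (k + 1) - (1 / (n : ℝ)) • ∑ i, G i (x (k + 1))
      = (b : ℝ)⁻¹ • ∑ j, D (s ⟨k, hk⟩ j) - (Fintype.card (Fin n) : ℝ)⁻¹ • ∑ i, D i + e s := by
    intro s
    simp only [hv.2 s k hk, D, e, sum_sub_distrib, smul_sub, one_div, Fintype.card_fin]
    abel
  have he : ∀ s t, e (update s ⟨k, hk⟩ t) = e s := fun s t => by
    simp only [e, spider_update_eq hv s ⟨k, hk⟩ t k le_rfl]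
  have hbatch : ∀ s, ∑ t : Fin b → Fin n,
      ‖(b : ℝ)⁻¹ • ∑ j, D (t j) - (Fintype.card (Fin n) : ℝ)⁻¹ • ∑ i, D i + e s‖ ^ 2
        ≤ (n : ℝ) ^ b * (‖e s‖ ^ 2 + c) := by
    intro s
    refine (sum_pi_norm_batch_mean_sub_mean_add_sq_le (by omega) D (e s)).trans ?_
    have hD : (n : ℝ)⁻¹ * ∑ i, ‖D i‖ ^ 2 ≤ L ^ 2 * ‖x (k + 1) - x k‖ ^ 2 := by
      simpa only [one_div] using hG (x (k + 1)) (x k)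
    simp only [Fintype.card_fin, c, div_eq_inv_mul, mul_assoc]
    gcongr
  have hcard : (Fintype.card (Fin b → Fin n) : ℝ) = (n : ℝ) ^ b := by simp
  rw [← mul_le_mul_iff_right₀ (by positivity : (0 : ℝ) < (n : ℝ) ^ b)]
  calc (n : ℝ) ^ b * ∑ s, ‖v s (k + 1) - (1 / (n : ℝ)) • ∑ i, G i (x (k + 1))‖ ^ 2
      = ∑ s, ∑ t : Fin b → Fin n,
          ‖(b : ℝ)⁻¹ • ∑ j, D (t j) - (Fintype.card (Fin n) : ℝ)⁻¹ • ∑ i, D i + e s‖ ^ 2 := by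
        rw [← hcard, ← nsmul_eq_mul, ← Fintype.sum_sum_update _ ⟨k, hk⟩]
        simp only [hsplit, update_self, he]
    _ ≤ ∑ s, (n : ℝ) ^ b * (‖e s‖ ^ 2 + c) := sum_le_sum fun s _ => hbatch s
    _ = (n : ℝ) ^ b * (∑ s, ‖e s‖ ^ 2 + ((n : ℝ) ^ b) ^ K * c) := by
        simp [← mul_sum, sum_add_distrib]

theorem sum_norm_spider_sub_mean_le [SeminormedAddCommGroup E] (hn : 1 ≤ n) (hb : 1 ≤ b)
    {L : ℝ} (hG : MeanSqLipschitzWith L G) (hv : IsSpiderEstimator G x w v) :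
    ∀ k ≤ K, ∑ s, ‖v s k - (1 / (n : ℝ)) • ∑ i, G i (x k)‖ ^ 2
      ≤ ((n : ℝ) ^ b) ^ K * (‖w - (1 / (n : ℝ)) • ∑ i, G i (x 0)‖ ^ 2
          + L ^ 2 / b * ∑ i ∈ range k, ‖x (i + 1) - x i‖ ^ 2) := by
  intro k
  induction k with
  | zero => simp [hv.1]
  | succ k ih =>
    intro hk
    have hstep := sum_norm_spider_sub_mean_succ_le hn hb hG hv k hk
    rw [sum_range_succ]
    linarith [ih (by omega)]

end Spider

end

theorem stmt_3_general {E F : Type*} [NormedAddCommGroup E]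
    [NormedAddCommGroup F] [InnerProductSpace ℝ F]
    (n : ℕ) (hn : 1 ≤ n) (L : ℝ) (G : Fin n → E → F)
    (hlip : ∀ x y : E,
      (1 / (n : ℝ)) * ∑ i : Fin n, ‖G i x - G i y‖ ^ 2 ≤ L ^ 2 * ‖x - y‖ ^ 2)
    (K : ℕ) (b : ℕ) (hb : 1 ≤ b) (x : ℕ → E) (w : F)
    (v : (Fin K → Fin b → Fin n) → ℕ → F)
    (hv0 : ∀ s, v s 0 = w)
    (hvrec : ∀ s, ∀ k, ∀ hk : k < K,
      v s (k + 1) =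
        ((1 / (b : ℝ)) • ∑ j : Fin b,
            (G (s ⟨k, hk⟩ j) (x (k + 1)) - G (s ⟨k, hk⟩ j) (x k))) + v s k) :
    (1 / ((n : ℝ) ^ b) ^ K) *
        ∑ s : Fin K → Fin b → Fin n,
          ‖v s K - (1 / (n : ℝ)) • ∑ i : Fin n, G i (x K)‖ ^ 2
      ≤ ‖w - (1 / (n : ℝ)) • ∑ i : Fin n, G i (x 0)‖ ^ 2
          + (L ^ 2 / (b : ℝ)) * ∑ k ∈ Finset.range K, ‖x (k + 1) - x k‖ ^ 2 := by
  rw [one_div_mul_eq_div, div_le_iff₀' (by positivity)]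
  exact sum_norm_spider_sub_mean_le hn hb hlip ⟨hv0, hvrec⟩ K le_rfl

/-- Telescoped SPIDER gradient-estimation error bound (Lemma 3), in Euclidean
space with deterministic iterates: the average over all sample sequences
`s : Fin K → (Fin b → Fin n)` of `‖v s K − Ḡ (x K)‖²` is at most
`‖w − Ḡ (x 0)‖² + (L²/b) ∑_{k<K} ‖x (k+1) − x k‖²`. -/
theorem stmt_3 {E F : Type*} [NormedAddCommGroup E] [InnerProductSpace ℝ E]
    [NormedAddCommGroup F] [InnerProductSpace ℝ F]
    (n : ℕ) (hn : 1 ≤ n) (L : ℝ) (hL : 0 ≤ L) (G : Fin n → E → F)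
    (hlip : ∀ x y : E,
      (1 / (n : ℝ)) * ∑ i : Fin n, ‖G i x - G i y‖ ^ 2 ≤ L ^ 2 * ‖x - y‖ ^ 2)
    (K : ℕ) (b : ℕ) (hb : 1 ≤ b) (x : ℕ → E) (w : F)
    (v : (Fin K → Fin b → Fin n) → ℕ → F)
    (hv0 : ∀ s, v s 0 = w)
    (hvrec : ∀ s, ∀ k, ∀ hk : k < K,
      v s (k + 1) =
        ((1 / (b : ℝ)) • ∑ j : Fin b,
            (G (s ⟨k, hk⟩ j) (x (k + 1)) - G (s ⟨k, hk⟩ j) (x k))) + v s k) :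
    (1 / ((n : ℝ) ^ b) ^ K) *
        ∑ s : Fin K → Fin b → Fin n,
          ‖v s K - (1 / (n : ℝ)) • ∑ i : Fin n, G i (x K)‖ ^ 2
      ≤ ‖w - (1 / (n : ℝ)) • ∑ i : Fin n, G i (x 0)‖ ^ 2
          + (L ^ 2 / (b : ℝ)) * ∑ k ∈ Finset.range K, ‖x (k + 1) - x k‖ ^ 2 :=
  stmt_3_general n hn L G hlip K b hb x w v hv0 hvrec
end

section
/- Let E and F be real inner product spaces, let n ≥ 1, and let G : Fin n → E → F be a mean-square L-Lipschitz family with mean Ḡ, and suppose in addition the variance bound (1/n) ∑_{i : Fin n} ‖G i z − Ḡ z‖² ≤ σ² holds for all z ∈ E. Fix K ≥ 0, batch sizes b₁ ≥ 1 and b₂ ≥ 1, and points x : ℕ → E. For each pair (s₁, s₂) with s₁ : Fin b₁ → Fin n and s₂ : Fin K → (Fin b₂ → Fin n), define v : ℕ → F by v 0 = (1/b₁) ∑_{j : Fin b₁} G (s₁ j) (x 0) and, for k < K, v (k+1) = (1/b₂) ∑_{j : Fin b₂} (G (s₂ k j) (x (k+1)) − G (s₂ k j) (x k)) + v k. Then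 the average over all pairs (s₁, s₂) of ‖v K − Ḡ (x K)‖² is at most σ²/b₁ + (L²/b₂) ∑_{k=0}^{K−1} ‖x (k+1) − x k‖². (Lemma 1 of the paper — the bounded gradient estimation error of R-SPIDER conditioned on the iterates — specialized to Euclidean space.) -/
/-!
Writing `Ḡ z` for the mean `(1/n) ∑ i, G i z`, the recursion telescopes: the error
`v K - Ḡ (x K)` equals the initial sample mean of the centered gradients
`G i (x 0) - Ḡ (x 0)`, plus for every `k < K` the sample mean of the centered increments
`(G i (x (k+1)) - G i (x k)) - (Ḡ (x (k+1)) - Ḡ (x k))`. These are averages of centered terms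
over independent coordinates of the sample, so all cross terms vanish in mean square and the
mean-square error is the sum of the individual variances: a sample mean of `b` centered draws
has `1/b` times their variance, centering does not increase the second moment, and the
variance bound and the mean-square Lipschitz bound finish the estimate.
-/

open Finset
open scoped RealInnerProductSpace BigOperators

section

variable {α ι κ M F : Type*} [NormedAddCommGroup F] [InnerProductSpace ℝ F]

lemma sum_pi_sum_apply_eq_zero [Fintype α] [DecidableEq α] [Fintype ι] [AddCommMonoid M]
    (f : α → ι → M) (hf : ∀ a, ∑ i, f a i = 0) :
    ∑ s : α → ι, ∑ a, f a (s a) = 0 := by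
  rw [sum_comm]
  refine sum_eq_zero fun a _ => ?_
  simpa [hf a] using Fintype.sum_piFinset_apply (f a) univ a

lemma expect_expect_eq_sum_sum [Fintype ι] [Fintype κ] (f : ι → κ → ℝ) :
    𝔼 i, 𝔼 j, f i j = 1 / (Fintype.card ι * Fintype.card κ) * ∑ i, ∑ j, f i j := by
  simp only [Fintype.expect_eq_sum_div_card, ← sum_div, div_div]
  ring

lemma expect_expect_norm_add_sq_of_sum_eq_zero [Fintype ι] [Nonempty ι] [Fintype κ]
    [Nonempty κ] (c : ι → F) (d : κ → F) (hd : ∑ t, d t = 0) :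
    𝔼 r, 𝔼 t, ‖c r + d t‖ ^ 2 = 𝔼 r, ‖c r‖ ^ 2 + 𝔼 t, ‖d t‖ ^ 2 := by
  have hcross : ∀ r, 𝔼 t, 2 * ⟪c r, d t⟫ = 0 := fun r => by
    rw [← mul_expect, Fintype.expect_eq_sum_div_card, ← inner_sum, hd, inner_zero_right,
      zero_div, mul_zero]
  simp only [norm_add_sq_real, expect_add_distrib, hcross, add_zero, Fintype.expect_const]

lemma expect_pi_norm_sum_sq_of_sum_eq_zero [Fintype ι] [Nonempty ι] {m : ℕ}
    (f : Fin m → ι → F) (hf : ∀ a, ∑ i, f a i = 0) :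
    𝔼 s : Fin m → ι, ‖∑ a, f a (s a)‖ ^ 2 = ∑ a, 𝔼 i, ‖f a i‖ ^ 2 := by
  induction m with
  | zero => simp
  | succ m ih =>
    -- split off the first draw, which is independent of the remaining ones
    rw [← Fintype.expect_equiv (Fin.consEquiv fun _ => ι)
      (fun p => ‖∑ a : Fin m, f a.succ (p.2 a) + f 0 p.1‖ ^ 2) _
      (fun p => by simp [Fin.sum_univ_succ, add_comm]), ← univ_product_univ, expect_product]
    dsimp only
    rw [expect_comm, expect_expect_norm_add_sq_of_sum_eq_zero _ _ (hf 0),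
      ih _ fun a => hf a.succ, Fin.sum_univ_succ, add_comm]

lemma expect_norm_one_div_smul_sum_sq_of_sum_eq_zero [Fintype ι] [Nonempty ι] (g : ι → F)
    (hg : ∑ i, g i = 0) (b : ℕ) :
    𝔼 s : Fin b → ι, ‖(1 / (b : ℝ)) • ∑ j, g (s j)‖ ^ 2 = (𝔼 i, ‖g i‖ ^ 2) / b := by
  simp_rw [norm_smul, mul_pow, ← mul_expect,
    expect_pi_norm_sum_sq_of_sum_eq_zero (fun _ => g) fun _ => hg]
  rw [sum_const, card_univ, Fintype.card_fin, nsmul_eq_mul, Real.norm_eq_abs, sq_abs]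
  rcases eq_or_ne b 0 with rfl | hb
  · simp
  · field_simp

lemma smul_sum_sub_eq_smul_sum_sub {b : ℕ} (hb : b ≠ 0) (y : Fin b → F) (m : F) :
    (1 / (b : ℝ)) • ∑ j, y j - m = (1 / (b : ℝ)) • ∑ j, (y j - m) := by
  rw [sum_sub_distrib, smul_sub, sum_const, card_univ, Fintype.card_fin,
    ← Nat.cast_smul_eq_nsmul ℝ, smul_smul, one_div_mul_cancel (by exact_mod_cast hb), one_smul]

section Centered

variable [Fintype ι]

noncomputable def centered (y : ι → F) (i : ι) : F :=
  y i - (1 / (Fintype.card ι : ℝ)) • ∑ i', y i'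

lemma card_smul_one_div_card_smul_sum (y : ι → F) :
    (Fintype.card ι : ℝ) • (1 / (Fintype.card ι : ℝ)) • ∑ i, y i = ∑ i, y i := by
  rcases isEmpty_or_nonempty ι with hι | hι
  · simp
  · rw [smul_smul, mul_one_div_cancel (by positivity), one_smul]

lemma sum_centered (y : ι → F) : ∑ i, centered y i = 0 := by
  simp only [centered]
  rw [sum_sub_distrib, sum_const, card_univ, ← Nat.cast_smul_eq_nsmul ℝ,
    card_smul_one_div_card_smul_sum, sub_self]

lemma sum_norm_centered_sq_le (y : ι → F) : ∑ i, ‖centered y i‖ ^ 2 ≤ ∑ i, ‖y i‖ ^ 2 := by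
  have hsum := (card_smul_one_div_card_smul_sum y).symm
  simp only [centered, norm_sub_sq_real]
  generalize (1 / (Fintype.card ι : ℝ)) • ∑ i', y i' = μ at hsum ⊢
  rw [sum_add_distrib, sum_sub_distrib, ← mul_sum, ← sum_inner, hsum, real_inner_smul_left,
    real_inner_self_eq_norm_sq, sum_const, card_univ, nsmul_eq_mul]
  nlinarith [sq_nonneg ‖μ‖, (Nat.cast_nonneg (Fintype.card ι) : (0 : ℝ) ≤ _)]

lemma expect_norm_centered_sq_le (y : ι → F) :
    𝔼 i, ‖centered y i‖ ^ 2 ≤ 𝔼 i, ‖y i‖ ^ 2 := by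
  simp only [Fintype.expect_eq_sum_div_card]
  gcongr ?_ / _
  exact sum_norm_centered_sq_le y

end Centered

lemma spider_error_eq {E : Type*} {n K b₁ b₂ : ℕ} (G : Fin n → E → F) (x : ℕ → E)
    (hb₁ : b₁ ≠ 0) (hb₂ : b₂ ≠ 0) {v : ℕ → F} {s₁ : Fin b₁ → Fin n}
    {s₂ : Fin K → Fin b₂ → Fin n}
    (hv0 : v 0 = (1 / (b₁ : ℝ)) • ∑ j, G (s₁ j) (x 0))
    (hvrec : ∀ k, ∀ hk : k < K, v (k + 1) = (1 / (b₂ : ℝ)) • ∑ j,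
        (G (s₂ ⟨k, hk⟩ j) (x (k + 1)) - G (s₂ ⟨k, hk⟩ j) (x k)) + v k) :
    v K - (1 / (n : ℝ)) • ∑ i, G i (x K) =
      (1 / (b₁ : ℝ)) • ∑ j, centered (fun i => G i (x 0)) (s₁ j) +
        ∑ k : Fin K, (1 / (b₂ : ℝ)) • ∑ j,
          centered (fun i => G i (x (k + 1)) - G i (x k)) (s₂ k j) := by
  rw [eq_sum_range_sub (fun k => v k - (1 / (n : ℝ)) • ∑ i, G i (x k)) K, sum_range]
  congr 1
  · rw [hv0, smul_sum_sub_eq_smul_sum_sub hb₁]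
    simp only [centered, Fintype.card_fin]
  · refine sum_congr rfl fun k _ => ?_
    simp only [centered, Fintype.card_fin]
    rw [hvrec k k.isLt, Fin.eta, ← smul_sum_sub_eq_smul_sum_sub hb₂]
    simp only [sum_sub_distrib, smul_sub]
    abel

end

theorem stmt_4_general {E F : Type*} [NormedAddCommGroup E] [InnerProductSpace ℝ E]
    [NormedAddCommGroup F] [InnerProductSpace ℝ F]
    (n : ℕ) (hn : 1 ≤ n) (L : ℝ) (G : Fin n → E → F)
    (hlip : ∀ x y : E,
      (1 / (n : ℝ)) * ∑ i : Fin n, ‖G i x - G i y‖ ^ 2 ≤ L ^ 2 * ‖x - y‖ ^ 2)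
    (σ : ℝ)
    (hvar : ∀ z : E,
      (1 / (n : ℝ)) *
          ∑ i : Fin n, ‖G i z - (1 / (n : ℝ)) • ∑ i' : Fin n, G i' z‖ ^ 2
        ≤ σ ^ 2)
    (K : ℕ) (b₁ b₂ : ℕ) (hb₁ : 1 ≤ b₁) (hb₂ : 1 ≤ b₂) (x : ℕ → E)
    (v : (Fin b₁ → Fin n) → (Fin K → Fin b₂ → Fin n) → ℕ → F)
    (hv0 : ∀ s₁ s₂, v s₁ s₂ 0 = (1 / (b₁ : ℝ)) • ∑ j : Fin b₁, G (s₁ j) (x 0))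
    (hvrec : ∀ s₁ s₂, ∀ k, ∀ hk : k < K,
      v s₁ s₂ (k + 1) =
        ((1 / (b₂ : ℝ)) • ∑ j : Fin b₂,
            (G (s₂ ⟨k, hk⟩ j) (x (k + 1)) - G (s₂ ⟨k, hk⟩ j) (x k)))
          + v s₁ s₂ k) :
    (1 / ((n : ℝ) ^ b₁ * ((n : ℝ) ^ b₂) ^ K)) *
        ∑ s₁ : Fin b₁ → Fin n, ∑ s₂ : Fin K → Fin b₂ → Fin n,
          ‖v s₁ s₂ K - (1 / (n : ℝ)) • ∑ i : Fin n, G i (x K)‖ ^ 2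
      ≤ σ ^ 2 / (b₁ : ℝ)
          + (L ^ 2 / (b₂ : ℝ)) * ∑ k ∈ Finset.range K, ‖x (k + 1) - x k‖ ^ 2 := by
  have : Nonempty (Fin n) := ⟨⟨0, hn⟩⟩
  have hexpect : ∀ f : Fin n → ℝ, 𝔼 i, f i = 1 / (n : ℝ) * ∑ i, f i := fun f => by
    rw [Fintype.expect_eq_sum_div_card, Fintype.card_fin, one_div_mul_eq_div]
  set e : (Fin b₁ → Fin n) → F := fun s₁ =>
    (1 / (b₁ : ℝ)) • ∑ j, centered (fun i => G i (x 0)) (s₁ j)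
  set D : Fin K → (Fin b₂ → Fin n) → F := fun k t =>
    (1 / (b₂ : ℝ)) • ∑ j, centered (fun i => G i (x (k + 1)) - G i (x k)) (t j)
  have hD : ∀ k, ∑ t, D k t = 0 := fun k => by
    simp only [D, ← smul_sum, sum_pi_sum_apply_eq_zero _ fun _ => sum_centered _, smul_zero]
  have he : 𝔼 s₁, ‖e s₁‖ ^ 2 ≤ σ ^ 2 / b₁ := by
    rw [expect_norm_one_div_smul_sum_sq_of_sum_eq_zero _ (sum_centered _)]
    gcongr
    simpa only [hexpect, centered, Fintype.card_fin] using hvar (x 0)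
  have hDk : ∀ k, 𝔼 t, ‖D k t‖ ^ 2 ≤ L ^ 2 / b₂ * ‖x (k + 1) - x k‖ ^ 2 := fun k => by
    rw [expect_norm_one_div_smul_sum_sq_of_sum_eq_zero _ (sum_centered _), div_mul_eq_mul_div]
    gcongr
    exact (expect_norm_centered_sq_le _).trans ((hexpect _).trans_le (hlip _ _))
  calc _ = 𝔼 s₁, 𝔼 s₂ : Fin K → Fin b₂ → Fin n, ‖e s₁ + ∑ k, D k (s₂ k)‖ ^ 2 := by
        simp only [expect_expect_eq_sum_sum, Fintype.card_fun, Fintype.card_fin, Nat.cast_pow,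
          spider_error_eq G x (by omega) (by omega) (hv0 _ _) (hvrec _ _), e, D]
    _ = 𝔼 s₁, ‖e s₁‖ ^ 2 + ∑ k, 𝔼 t, ‖D k t‖ ^ 2 := by
        rw [expect_expect_norm_add_sq_of_sum_eq_zero _ _ (sum_pi_sum_apply_eq_zero D hD),
          expect_pi_norm_sum_sq_of_sum_eq_zero D hD]
    _ ≤ _ := by
        rw [sum_range, mul_sum]
        exact add_le_add he (sum_le_sum fun k _ => hDk k)

/-- Lemma 1 of the paper (bounded gradient estimation error of R-SPIDER,
conditioned on the iterates), specialized to Euclidean space: the average over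
all pairs `(s₁, s₂)` of `‖v s₁ s₂ K − Ḡ (x K)‖²` is at most
`σ²/b₁ + (L²/b₂) ∑_{k<K} ‖x (k+1) − x k‖²`. -/
theorem stmt_4 {E F : Type*} [NormedAddCommGroup E] [InnerProductSpace ℝ E]
    [NormedAddCommGroup F] [InnerProductSpace ℝ F]
    (n : ℕ) (hn : 1 ≤ n) (L : ℝ) (hL : 0 ≤ L) (G : Fin n → E → F)
    (hlip : ∀ x y : E,
      (1 / (n : ℝ)) * ∑ i : Fin n, ‖G i x - G i y‖ ^ 2 ≤ L ^ 2 * ‖x - y‖ ^ 2)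
    (σ : ℝ)
    (hvar : ∀ z : E,
      (1 / (n : ℝ)) *
          ∑ i : Fin n, ‖G i z - (1 / (n : ℝ)) • ∑ i' : Fin n, G i' z‖ ^ 2
        ≤ σ ^ 2)
    (K : ℕ) (b₁ b₂ : ℕ) (hb₁ : 1 ≤ b₁) (hb₂ : 1 ≤ b₂) (x : ℕ → E)
    (v : (Fin b₁ → Fin n) → (Fin K → Fin b₂ → Fin n) → ℕ → F)
    (hv0 : ∀ s₁ s₂, v s₁ s₂ 0 = (1 / (b₁ : ℝ)) • ∑ j : Fin b₁, G (s₁ j) (x 0))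
    (hvrec : ∀ s₁ s₂, ∀ k, ∀ hk : k < K,
      v s₁ s₂ (k + 1) =
        ((1 / (b₂ : ℝ)) • ∑ j : Fin b₂,
            (G (s₂ ⟨k, hk⟩ j) (x (k + 1)) - G (s₂ ⟨k, hk⟩ j) (x k)))
          + v s₁ s₂ k) :
    (1 / ((n : ℝ) ^ b₁ * ((n : ℝ) ^ b₂) ^ K)) *
        ∑ s₁ : Fin b₁ → Fin n, ∑ s₂ : Fin K → Fin b₂ → Fin n,
          ‖v s₁ s₂ K - (1 / (n : ℝ)) • ∑ i : Fin n, G i (x K)‖ ^ 2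
      ≤ σ ^ 2 / (b₁ : ℝ)
          + (L ^ 2 / (b₂ : ℝ)) * ∑ k ∈ Finset.range K, ‖x (k + 1) - x k‖ ^ 2 :=
  stmt_4_general n hn L G hlip σ hvar K b₁ b₂ hb₁ hb₂ x v hv0 hvrec
end

section
/- Let E be a real Hilbert space and let f : E → ℝ be differentiable at every point, with gradient ∇f satisfying ‖∇f x − ∇f y‖ ≤ L ‖x − y‖ for all x, y ∈ E (L ≥ 0). Then for every x ∈ E, v ∈ E, and step size η̃ ≥ 0, setting x' = x − η̃ • v one has f(x') ≤ f(x) + (η̃/2) ‖∇f(x) − v‖² − (η̃/2)(1 − η̃ L) ‖v‖². (Equation (5) of the paper, the per-step descent inequality for an approximate-gradient step, in Euclidean space.) -/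
/-!
Along the segment from `x` to `y = x + d`, the slope `⟪∇f (x + t • d), d⟫` of `f` exceeds
`⟪∇f x, d⟫` by at most `L t ‖d‖²`, so comparing with the quadratic model on `[0, 1]` gives the
descent lemma `f y ≤ f x + ⟪∇f x, y - x⟫ + L/2 ‖y - x‖²`. For `y = x - η̃ • v`, expanding
`‖∇f x - v‖²` shows the claimed bound is the descent lemma plus the term `(η̃/2) ‖∇f x‖² ≥ 0`.
-/

open scoped RealInnerProductSpace

section Descent

variable {E : Type*} [NormedAddCommGroup E] [InnerProductSpace ℝ E] [CompleteSpace E]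
  {f : E → ℝ}

theorem HasGradientAt.hasDerivAt_comp_add_smul {g x d : E} {t : ℝ}
    (h : HasGradientAt f g (x + t • d)) :
    HasDerivAt (fun s : ℝ => f (x + s • d)) ⟪g, d⟫ t := by
  have hline : HasDerivAt (fun s : ℝ => x + s • d) d t := by
    simpa using ((hasDerivAt_id t).smul_const d).const_add x
  exact h.hasFDerivAt.comp_hasDerivAt t hline

theorem le_add_inner_gradient_add_half_mul_norm_sq (hf : ∀ z, DifferentiableAt ℝ f z)
    {L : ℝ} {x : E} (hlip : ∀ z, ‖gradient f z - gradient f x‖ ≤ L * ‖z - x‖) (y : E) :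
    f y ≤ f x + ⟪gradient f x, y - x⟫ + L / 2 * ‖y - x‖ ^ 2 := by
  set d := y - x
  have hderiv (t : ℝ) : HasDerivAt (fun s : ℝ => f (x + s • d)) ⟪gradient f (x + t • d), d⟫ t :=
    (hf _).hasGradientAt.hasDerivAt_comp_add_smul
  have hmodel (t : ℝ) : HasDerivAt
      (fun s : ℝ => f x + s * ⟪gradient f x, d⟫ + L / 2 * s ^ 2 * ‖d‖ ^ 2)
      (⟪gradient f x, d⟫ + L * t * ‖d‖ ^ 2) t := by
    exact ((((hasDerivAt_id' t).mul_const ⟪gradient f x, d⟫).const_add (f x)).add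
      (((hasDerivAt_pow 2 t).const_mul (L / 2)).mul_const (‖d‖ ^ 2))).congr_deriv (by ring)
  have hslope {t : ℝ} (ht : 0 ≤ t) :
      ⟪gradient f (x + t • d), d⟫ ≤ ⟪gradient f x, d⟫ + L * t * ‖d‖ ^ 2 := by
    have := calc ⟪gradient f (x + t • d) - gradient f x, d⟫
        _ ≤ ‖gradient f (x + t • d) - gradient f x‖ * ‖d‖ := real_inner_le_norm _ _
        _ ≤ L * ‖x + t • d - x‖ * ‖d‖ := by gcongr; exact hlip _
        _ = L * t * ‖d‖ ^ 2 := by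
          rw [add_sub_cancel_left, norm_smul, Real.norm_of_nonneg ht]; ring
    rw [inner_sub_left] at this
    linarith
  have key := image_le_of_deriv_right_le_deriv_boundary
    (fun t _ => (hderiv t).continuousAt.continuousWithinAt)
    (fun t _ => (hderiv t).hasDerivWithinAt) (by simp)
    (fun t _ => (hmodel t).continuousAt.continuousWithinAt)
    (fun t _ => (hmodel t).hasDerivWithinAt) (fun t ht => hslope ht.1)
    (Set.right_mem_Icc.2 zero_le_one)
  simpa [d] using key

end Descent

theorem stmt_6_general {E : Type*} [NormedAddCommGroup E] [InnerProductSpace ℝ E]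
    [CompleteSpace E]
    (f : E → ℝ) (hf : ∀ x : E, DifferentiableAt ℝ f x)
    (L : ℝ)
    (hlip : ∀ x y : E, ‖gradient f x - gradient f y‖ ≤ L * ‖x - y‖)
    (x : E) (v : E) (ηt : ℝ) (hη : 0 ≤ ηt) (x' : E) (hx' : x' = x - ηt • v) :
    f x' ≤ f x + (ηt / 2) * ‖gradient f x - v‖ ^ 2
        - (ηt / 2) * (1 - ηt * L) * ‖v‖ ^ 2 := by
  have hstep : x' - x = -(ηt • v) := by rw [hx']; abel
  have hdescent := le_add_inner_gradient_add_half_mul_norm_sq hf (fun z => hlip z x) x'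
  rw [hstep, inner_neg_right, real_inner_smul_right, norm_neg, norm_smul,
    Real.norm_of_nonneg hη] at hdescent
  rw [norm_sub_sq_real]
  nlinarith [mul_nonneg hη (sq_nonneg ‖gradient f x‖)]

/-- Equation (5) of the paper: the per-step descent inequality for an
approximate-gradient step in Euclidean (Hilbert) space: with
`x' = x − η̃ • v` (here `ηt` stands for the normalized step size `η̃`),
`f x' ≤ f x + (η̃/2) ‖∇f x − v‖² − (η̃/2)(1 − η̃ L) ‖v‖²`. -/
theorem stmt_6 {E : Type*} [NormedAddCommGroup E] [InnerProductSpace ℝ E]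
    [CompleteSpace E]
    (f : E → ℝ) (hf : ∀ x : E, DifferentiableAt ℝ f x)
    (L : ℝ) (hL : 0 ≤ L)
    (hlip : ∀ x y : E, ‖gradient f x - gradient f y‖ ≤ L * ‖x - y‖)
    (x : E) (v : E) (ηt : ℝ) (hη : 0 ≤ ηt) (x' : E) (hx' : x' = x - ηt • v) :
    f x' ≤ f x + (ηt / 2) * ‖gradient f x - v‖ ^ 2
        - (ηt / 2) * (1 - ηt * L) * ‖v‖ ^ 2 :=
  stmt_6_general f hf L hlip x v ηt hη x' hx'
end

section
/- Let ε > 0, L > 0, n₀ ≥ 1, and r > 0 be real numbers, and set η̃ = min(ε / (2 L n₀ r), 1 / (4 L n₀)). Then η̃ ≤ 1/(4 L n₀) and η̃ (1 − η̃ L) r² ≥ 3 ε (2 r − ε) / (16 L n₀). (The step-size inequality used in the proofs of Theorems 1 and 2, where r = ‖v_k‖ and η̃ is the normalized R-SPIDER learning rate.) -/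
/-! Since `η̃ L ≤ 1/(4 n₀) ≤ 1/4`, the damping factor `1 − η̃ L` is at least `3/4`, and
`η̃ r² = min (2 ε r) (r²) / (4 L n₀)`. Both entries of that minimum dominate `ε (2 r − ε)`:
the first trivially, the second because `r² − 2 ε r + ε² = (r − ε)² ≥ 0`. -/

lemma mul_two_mul_sub_le_min (ε r : ℝ) : ε * (2 * r - ε) ≤ min (2 * ε * r) (r ^ 2) :=
  le_min (by nlinarith [sq_nonneg ε]) (by nlinarith [sq_nonneg (r - ε)])

lemma min_div_mul_sq_eq {ε L n₀ r : ℝ} (hL : 0 < L) (hn₀ : 0 < n₀) (hr : 0 < r) :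
    min (ε / (2 * L * n₀ * r)) (1 / (4 * L * n₀)) * r ^ 2 =
      min (2 * ε * r) (r ^ 2) / (4 * L * n₀) := by
  rw [min_mul_of_nonneg _ _ (sq_nonneg r), ← min_div_div_right (by positivity)]
  congr 1
  · field_simp; ring
  · field_simp

lemma mul_le_quarter_of_le_one_div {η L n₀ : ℝ} (hL : 0 < L) (hn₀ : 1 ≤ n₀)
    (hη : η ≤ 1 / (4 * L * n₀)) : η * L ≤ 1 / 4 := by
  have hn₀' : 0 < n₀ := by linarith
  calc η * L ≤ 1 / (4 * L * n₀) * L := by gcongr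
    _ = 1 / (4 * n₀) := by field_simp
    _ ≤ 1 / 4 := by gcongr; linarith

/-- The step-size inequality used in the proofs of Theorems 1 and 2: with
`η̃ = min (ε / (2 L n₀ r)) (1 / (4 L n₀))` (here `ηt`), one has
`η̃ ≤ 1/(4 L n₀)` and `η̃ (1 − η̃ L) r² ≥ 3 ε (2 r − ε) / (16 L n₀)`. -/
theorem stmt_7 (ε L n₀ r : ℝ) (hε : 0 < ε) (hL : 0 < L) (hn₀ : 1 ≤ n₀)
    (hr : 0 < r) (ηt : ℝ) (hηt : ηt = min (ε / (2 * L * n₀ * r)) (1 / (4 * L * n₀))) :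
    ηt ≤ 1 / (4 * L * n₀) ∧
      3 * ε * (2 * r - ε) / (16 * L * n₀) ≤ ηt * (1 - ηt * L) * r ^ 2 := by
  have hn₀' : 0 < n₀ := by linarith
  have hle : ηt ≤ 1 / (4 * L * n₀) := hηt ▸ min_le_right _ _
  have hdamp : 3 / 4 ≤ 1 - ηt * L := by linarith [mul_le_quarter_of_le_one_div hL hn₀ hle]
  have hsq : ηt * r ^ 2 = min (2 * ε * r) (r ^ 2) / (4 * L * n₀) :=
    hηt ▸ min_div_mul_sq_eq hL hn₀' hr
  have hsq_nonneg : 0 ≤ ηt * r ^ 2 := hsq ▸ by positivity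
  refine ⟨hle, ?_⟩
  calc 3 * ε * (2 * r - ε) / (16 * L * n₀) = 3 / 4 * (ε * (2 * r - ε) / (4 * L * n₀)) := by
        field_simp; ring
    _ ≤ 3 / 4 * (ηt * r ^ 2) := by
        rw [hsq]; gcongr; exact mul_two_mul_sub_le_min ε r
    _ ≤ (1 - ηt * L) * (ηt * r ^ 2) := by gcongr
    _ = ηt * (1 - ηt * L) * r ^ 2 := by ring
end

section
/- Let E be a real Hilbert space and let f : E → ℝ be differentiable at every point, with gradient ∇f satisfying ‖∇f x − ∇f y‖ ≤ L ‖x − y‖ for all x, y ∈ E, where L > 0. Let ε > 0 and n₀ ≥ 1, let x ∈ E, and let v ∈ E with v ≠ 0 and ‖v − ∇f(x)‖² ≤ ε²/8. Set η = min(ε / (2 L n₀), ‖v‖ / (4 L n₀)) and x' = x − (η/‖v‖) • v. Then f(x') − f(x) ≤ −(ε / (64 L n₀)) (12 ‖v‖ − 7 ε). (The sufficient-decrease inequality of Theorems 1 and 2 for one normalized R-SPIDER step, in Euclidean space, with the gradient-estimation error bound taken as a deterministic hypothesis.) -/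
/-!
The descent lemma for an `L`-smooth function gives
`f x' - f x ≤ ⟪∇f x, x' - x⟫ + L ‖x' - x‖²`. Along the normalized step, Cauchy–Schwarz gives
`⟪∇f x, x' - x⟫ ≤ η (‖v - ∇f x‖ - ‖v‖)` and `‖x' - x‖ = η`. Writing `η = t / (L n₀)` with
`t = min (ε/2) (‖v‖/4)`, the claim reduces to a scalar inequality in `t`, `‖v‖`, `ε` and the
estimation error `e ≤ ε / √8`, checked separately in the two cases of the minimum.
-/

open scoped InnerProductSpace Gradient

theorem norm_fderiv_sub_fderiv_eq {𝕜 E : Type*} [RCLike 𝕜] [NormedAddCommGroup E]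
    [InnerProductSpace 𝕜 E] [CompleteSpace E] (f : E → 𝕜) (x y : E) :
    ‖fderiv 𝕜 f x - fderiv 𝕜 f y‖ = ‖∇ f x - ∇ f y‖ := by
  rw [← toDual_gradient, ← toDual_gradient, ← map_sub, LinearIsometryEquiv.norm_map]

section

variable {E : Type*} [NormedAddCommGroup E] [InnerProductSpace ℝ E]

/-- The descent lemma, with the constant `L` in place of the sharp `L / 2`. -/
theorem sub_le_inner_gradient_add_mul_norm_sq [CompleteSpace E] {f : E → ℝ}
    (hf : ∀ x, DifferentiableAt ℝ f x) {L : ℝ} (hL : 0 ≤ L) (hlip : ∀ x y, ‖∇ f x - ∇ f y‖ ≤ L * ‖x - y‖) (x y : E) :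
    f y - f x ≤ ⟪∇ f x, y - x⟫_ℝ + L * ‖y - x‖ ^ 2 := by
  have hmvt : ‖f y - f x - fderiv ℝ f x (y - x)‖ ≤ L * ‖y - x‖ * ‖y - x‖ := by
    refine (convex_segment x y).norm_image_sub_le_of_norm_fderiv_le' (fun z _ => hf z) ?_
      (left_mem_segment ℝ x y) (right_mem_segment ℝ x y)
    intro z hz
    rw [norm_fderiv_sub_fderiv_eq]
    exact (hlip z x).trans (mul_le_mul_of_nonneg_left (norm_sub_le_of_mem_segment hz) hL)
  rw [inner_gradient_left]
  linarith [(le_abs_self _).trans hmvt]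

theorem inner_neg_div_norm_smul_le (g v : E) {η : ℝ} (hη : 0 ≤ η) :
    ⟪g, -((η / ‖v‖) • v)⟫_ℝ ≤ η * (‖v - g‖ - ‖v‖) := by
  rcases eq_or_ne v 0 with rfl | hv
  · simpa using mul_nonneg hη (norm_nonneg g)
  have hv' : 0 < ‖v‖ := norm_pos_iff.mpr hv
  have hsplit : ⟪g, v⟫_ℝ = ‖v‖ ^ 2 - ⟪v - g, v⟫_ℝ := by
    rw [inner_sub_left, real_inner_self_eq_norm_sq, real_inner_comm]; ring
  have hcs : ⟪v - g, v⟫_ℝ ≤ ‖v - g‖ * ‖v‖ := real_inner_le_norm _ _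
  rw [inner_neg_right, real_inner_smul_right, hsplit]
  calc -(η / ‖v‖ * (‖v‖ ^ 2 - ⟪v - g, v⟫_ℝ))
      ≤ -(η / ‖v‖ * (‖v‖ ^ 2 - ‖v - g‖ * ‖v‖)) := by gcongr
    _ = η * (‖v - g‖ - ‖v‖) := by field_simp; ring

theorem norm_div_norm_smul {η : ℝ} (hη : 0 ≤ η) {v : E} (hv : v ≠ 0) :
    ‖(η / ‖v‖) • v‖ = η := by
  simpa [div_eq_mul_inv] using norm_smul_inv_norm' (𝕜 := ℝ) hη hv

theorem min_mul_sub_add_sq_le {a e ε : ℝ} (hε : 0 ≤ ε) (herr : 8 * e ^ 2 ≤ ε ^ 2) :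
    min (ε / 2) (a / 4) * (e - a) + min (ε / 2) (a / 4) ^ 2 ≤ -(ε / 64) * (12 * a - 7 * ε) := by
  have he' : 5 * e ≤ 2 * ε := by nlinarith
  rcases min_cases (ε / 2) (a / 4) with ⟨hmin, hle⟩ | ⟨hmin, _⟩
  · rw [hmin]
    nlinarith [mul_le_mul_of_nonneg_left hle hε, mul_le_mul_of_nonneg_left he' hε]
  · rw [hmin]
    nlinarith [sq_nonneg (6 * a - 4 * e - 3 * ε), sq_nonneg (a - ε)]

end

/-- Sufficient-decrease inequality of Theorems 1 and 2 for one normalized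
R-SPIDER step, in Euclidean space, with the gradient-estimation error bound as
a deterministic hypothesis: with `η = min (ε/(2Ln₀)) (‖v‖/(4Ln₀))` and
`x' = x − (η/‖v‖) • v`, one has
`f x' − f x ≤ −(ε/(64Ln₀)) (12‖v‖ − 7ε)`. -/
theorem stmt_8 {E : Type*} [NormedAddCommGroup E] [InnerProductSpace ℝ E]
    [CompleteSpace E]
    (f : E → ℝ) (hf : ∀ x : E, DifferentiableAt ℝ f x)
    (L : ℝ) (hL : 0 < L)
    (hlip : ∀ x y : E, ‖gradient f x - gradient f y‖ ≤ L * ‖x - y‖)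
    (ε n₀ : ℝ) (hε : 0 < ε) (hn₀ : 1 ≤ n₀)
    (x : E) (v : E) (hv : v ≠ 0)
    (herr : ‖v - gradient f x‖ ^ 2 ≤ ε ^ 2 / 8)
    (η : ℝ) (hη : η = min (ε / (2 * L * n₀)) (‖v‖ / (4 * L * n₀)))
    (x' : E) (hx' : x' = x - (η / ‖v‖) • v) :
    f x' - f x ≤ -(ε / (64 * L * n₀)) * (12 * ‖v‖ - 7 * ε) := by
  set a := ‖v‖
  set e := ‖v - ∇ f x‖
  set t := min (ε / 2) (a / 4)
  have hLn₀ : 0 < L * n₀ := by positivity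
  have hηt : η = t / (L * n₀) := by
    rw [hη, ← min_div_div_right hLn₀.le]
    congr 1 <;> ring
  have hη₀ : 0 ≤ η := by rw [hηt]; positivity
  have hstep : x' - x = -((η / a) • v) := by rw [hx']; abel
  have hnorm : ‖x' - x‖ = η := by rw [hstep, norm_neg, norm_div_norm_smul hη₀ hv]
  have hinner : ⟪∇ f x, x' - x⟫_ℝ ≤ η * (e - a) := hstep ▸ inner_neg_div_norm_smul_le _ v hη₀
  have hscalar : t * (e - a) + t ^ 2 ≤ -(ε / 64) * (12 * a - 7 * ε) :=
    min_mul_sub_add_sq_le hε.le (by linarith)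
  calc f x' - f x ≤ ⟪∇ f x, x' - x⟫_ℝ + L * ‖x' - x‖ ^ 2 :=
        sub_le_inner_gradient_add_mul_norm_sq hf hL.le hlip x x'
    _ ≤ η * (e - a) + L * n₀ * η ^ 2 := by
        rw [hnorm]
        gcongr
        exact le_mul_of_one_le_right hL.le hn₀
    _ = (t * (e - a) + t ^ 2) / (L * n₀) := by rw [hηt]; field_simp
    _ ≤ -(ε / 64) * (12 * a - 7 * ε) / (L * n₀) := by gcongr
    _ = -(ε / (64 * L * n₀)) * (12 * a - 7 * ε) := by ring
end

section
/- Let E be a real Hilbert space and let f : E → ℝ be differentiable at every point, with gradient ∇f satisfying ‖∇f x − ∇f y‖ ≤ L ‖x − y‖ for all x, y ∈ E, where L > 0. Let n₀ ≥ 1, let x ∈ E and v ∈ E, and set x' = x − (1/(2 L n₀)) • v. Then f(x') ≤ f(x) + (1/(4 L n₀)) ‖∇f(x) − v‖² − (1/(8 L n₀)) ‖v‖². (The per-step descent inequality, with unnormalized step size η̃ = 1/(2Ln₀), used in the proof of the key lemma for the gradient dominated variant R-GD-SPIDER, in Euclidean space.) -/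
/-!
The descent lemma `f y ≤ f x + ⟪∇f x, y - x⟫ + L/2 ‖y - x‖²` holds because, along the segment
from `x` to `y`, the Lipschitz bound on `∇f` makes the gap between this quadratic model and `f`
nondecreasing. For `y = x - η • v`, the polarization identity
`2⟪∇f x, v⟫ = ‖∇f x‖² + ‖v‖² - ‖∇f x - v‖²` and `Lη ≤ 1/2` then give the claim, after dropping
the term `-(η/2) ‖∇f x‖²`.
-/

open InnerProductSpace

section Descent

variable {E : Type*} [NormedAddCommGroup E] [InnerProductSpace ℝ E] [CompleteSpace E]
  {f : E → ℝ} {L : ℝ}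

theorem hasDerivAt_apply_add_smul {x d : E} {t : ℝ} (hf : DifferentiableAt ℝ f (x + t • d)) :
    HasDerivAt (fun s : ℝ => f (x + s • d)) ⟪gradient f (x + t • d), d⟫_ℝ t := by
  have hline : HasDerivAt (fun s : ℝ => x + s • d) d t := by
    simpa using ((hasDerivAt_id t).smul_const d).const_add x
  have := hf.hasGradientAt.hasFDerivAt.comp_hasDerivAt t hline
  rwa [toDual_apply_apply] at this

theorem inner_gradient_add_smul_sub_le
    (hlip : ∀ x y : E, ‖gradient f x - gradient f y‖ ≤ L * ‖x - y‖)
    (x d : E) {t : ℝ} (ht : 0 ≤ t) :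
    ⟪gradient f (x + t • d) - gradient f x, d⟫_ℝ ≤ L * t * ‖d‖ ^ 2 :=
  calc ⟪gradient f (x + t • d) - gradient f x, d⟫_ℝ
      ≤ ‖gradient f (x + t • d) - gradient f x‖ * ‖d‖ := real_inner_le_norm _ _
    _ ≤ L * ‖(x + t • d) - x‖ * ‖d‖ := by gcongr; exact hlip _ _
    _ = L * t * ‖d‖ ^ 2 := by
        rw [add_sub_cancel_left, norm_smul, Real.norm_of_nonneg ht]; ring

/-- The descent lemma. -/
theorem apply_le_add_inner_gradient_add_sq (hf : ∀ x : E, DifferentiableAt ℝ f x)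
    (hlip : ∀ x y : E, ‖gradient f x - gradient f y‖ ≤ L * ‖x - y‖) (x y : E) :
    f y ≤ f x + ⟪gradient f x, y - x⟫_ℝ + L / 2 * ‖y - x‖ ^ 2 := by
  set d := y - x
  let gap : ℝ → ℝ := fun t =>
    f x + t * ⟪gradient f x, d⟫_ℝ + L / 2 * t ^ 2 * ‖d‖ ^ 2 - f (x + t • d)
  have hgap : ∀ t, HasDerivAt gap
      (⟪gradient f x, d⟫_ℝ + L * t * ‖d‖ ^ 2 - ⟪gradient f (x + t • d), d⟫_ℝ) t := by
    intro t
    have hquad : HasDerivAt (fun s : ℝ => L / 2 * s ^ 2 * ‖d‖ ^ 2) (L * t * ‖d‖ ^ 2) t := by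
      refine (((hasDerivAt_pow 2 t).const_mul (L / 2)).mul_const (‖d‖ ^ 2)).congr_deriv ?_
      push_cast; ring
    have := (((hasDerivAt_id t).mul_const ⟪gradient f x, d⟫_ℝ).const_add (f x)).add hquad
      |>.sub (hasDerivAt_apply_add_smul (x := x) (d := d) (hf _))
    exact this.congr_deriv (by rw [one_mul])
  have hmono : MonotoneOn gap (Set.Icc 0 1) := by
    refine monotoneOn_of_hasDerivWithinAt_nonneg (convex_Icc 0 1)
      (fun t _ => (hgap t).continuousAt.continuousWithinAt)
      (fun t _ => (hgap t).hasDerivWithinAt) fun t ht => ?_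
    have := inner_gradient_add_smul_sub_le hlip x d (interior_subset ht).1
    rw [inner_sub_left] at this
    linarith
  have h01 := hmono (by simp) (by simp) zero_le_one
  simp only [gap, zero_mul, add_zero, zero_smul, one_mul, one_pow, one_smul, ne_eq,
    OfNat.ofNat_ne_zero, not_false_eq_true, zero_pow, mul_zero, sub_self] at h01
  rw [add_sub_cancel] at h01
  linarith

theorem apply_sub_smul_le_of_mul_le (hf : ∀ x : E, DifferentiableAt ℝ f x)
    (hlip : ∀ x y : E, ‖gradient f x - gradient f y‖ ≤ L * ‖x - y‖)
    {η : ℝ} (hη : 0 ≤ η) (hLη : L * η ≤ 1 / 2) (x v : E) :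
    f (x - η • v) ≤ f x + η / 2 * ‖gradient f x - v‖ ^ 2 - η / 4 * ‖v‖ ^ 2 := by
  have hdesc := apply_le_add_inner_gradient_add_sq hf hlip x (x - η • v)
  rw [sub_sub_cancel_left, inner_neg_right, real_inner_smul_right, norm_neg, norm_smul,
    Real.norm_of_nonneg hη] at hdesc
  have hpolar := norm_sub_sq_real (gradient f x) v
  have hquad : L / 2 * (η * ‖v‖) ^ 2 ≤ η / 4 * ‖v‖ ^ 2 := by
    have : L * η * η ≤ 1 / 2 * η := mul_le_mul_of_nonneg_right hLη hη
    nlinarith [sq_nonneg ‖v‖]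
  nlinarith [mul_nonneg hη (sq_nonneg ‖gradient f x‖)]

end Descent

/-- Per-step descent inequality with unnormalized step size `1/(2Ln₀)` used in
the gradient dominated analysis of R-GD-SPIDER (Euclidean case): with
`x' = x − (1/(2Ln₀)) • v`,
`f x' ≤ f x + (1/(4Ln₀)) ‖∇f x − v‖² − (1/(8Ln₀)) ‖v‖²`. -/
theorem stmt_14 {E : Type*} [NormedAddCommGroup E] [InnerProductSpace ℝ E]
    [CompleteSpace E]
    (f : E → ℝ) (hf : ∀ x : E, DifferentiableAt ℝ f x)
    (L : ℝ) (hL : 0 < L)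
    (hlip : ∀ x y : E, ‖gradient f x - gradient f y‖ ≤ L * ‖x - y‖)
    (n₀ : ℝ) (hn₀ : 1 ≤ n₀) (x v : E)
    (x' : E) (hx' : x' = x - (1 / (2 * L * n₀)) • v) :
    f x' ≤ f x + (1 / (4 * L * n₀)) * ‖gradient f x - v‖ ^ 2
        - (1 / (8 * L * n₀)) * ‖v‖ ^ 2 := by
  have hn₀pos : 0 < n₀ := one_pos.trans_le hn₀
  have hstep : L * (1 / (2 * L * n₀)) ≤ 1 / 2 := by
    rw [mul_one_div, div_le_iff₀ (by positivity)]
    nlinarith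
  have hdescent := apply_sub_smul_le_of_mul_le hf hlip (by positivity) hstep x v
  rw [hx']
  convert hdescent using 3 <;> ring
end

section
/- Let K ≥ 1 be a natural number, let ε > 0, L > 0, n₀ ≥ 1 be reals, let F : ℕ → ℝ and F* ∈ ℝ with F(K) ≥ F*, and suppose K ≥ 64 L n₀ (F(0) − F*) / ε². Let b, c : ℕ → ℝ be sequences with b(k) ≥ 0 and 0 ≤ c(k) ≤ ε²/16 for all k < K, and suppose F(k+1) ≤ F(k) + (1/(4 L n₀)) c(k) − (1/(8 L n₀)) b(k) for every k < K. Then (1/K) ∑_{k=0}^{K−1} b(k) ≤ ε²/4, and consequently (1/K) ∑_{k=0}^{K−1} (2 c(k) + 2 b(k)) ≤ ε². (The averaging argument in the key lemma for the gradient dominated variant: after K = 64Ln₀Δ/ε² iterations, the average squared norm of the SPIDER gradient estimates is at most ε²/4 and the average squared gradient norm is at most ε².) -/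
/-- The averaging argument in the key lemma of the gradient dominated stage
analysis of R-GD-SPIDER: if `K ≥ 64Ln₀(F 0 − F*)/ε²`, the per-step errors
satisfy `0 ≤ c k ≤ ε²/16`, and
`F (k+1) ≤ F k + (1/(4Ln₀)) c k − (1/(8Ln₀)) b k` for `k < K`, then
`(1/K) ∑_{k<K} b k ≤ ε²/4` and `(1/K) ∑_{k<K} (2 c k + 2 b k) ≤ ε²`. -/
theorem stmt_15 (K : ℕ) (hK : 1 ≤ K) (ε L n₀ : ℝ) (hε : 0 < ε) (hL : 0 < L)
    (hn₀ : 1 ≤ n₀) (F : ℕ → ℝ) (Fstar : ℝ) (hFK : Fstar ≤ F K)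
    (hKlarge : 64 * L * n₀ * (F 0 - Fstar) / ε ^ 2 ≤ (K : ℝ))
    (b c : ℕ → ℝ)
    (hb : ∀ k < K, 0 ≤ b k)
    (hc : ∀ k < K, 0 ≤ c k ∧ c k ≤ ε ^ 2 / 16)
    (hdec : ∀ k < K,
      F (k + 1) ≤ F k + (1 / (4 * L * n₀)) * c k - (1 / (8 * L * n₀)) * b k) :
    (1 / (K : ℝ)) * ∑ k ∈ Finset.range K, b k ≤ ε ^ 2 / 4 ∧
      (1 / (K : ℝ)) * ∑ k ∈ Finset.range K, (2 * c k + 2 * b k) ≤ ε ^ 2 := by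
  have hLn : 0 < L * n₀ := mul_pos hL (lt_of_lt_of_le one_pos hn₀)
  have hKpos : (0 : ℝ) < K := by exact_mod_cast hK
  -- telescoping
  have htel : ∀ m ≤ K, F m ≤ F 0 + ∑ k ∈ Finset.range m,
      ((1 / (4 * L * n₀)) * c k - (1 / (8 * L * n₀)) * b k) := by
    intro m hm
    induction m with
    | zero => simp
    | succ n ih =>
      have hn : n < K := Nat.lt_of_succ_le hm
      have := hdec n hn
      have ihn := ih (le_of_lt hn)
      rw [Finset.sum_range_succ]
      linarith
  have hmain := htel K le_rfl
  have hsumsplit : ∑ k ∈ Finset.range K,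
      ((1 / (4 * L * n₀)) * c k - (1 / (8 * L * n₀)) * b k)
      = (1 / (4 * L * n₀)) * ∑ k ∈ Finset.range K, c k
        - (1 / (8 * L * n₀)) * ∑ k ∈ Finset.range K, b k := by
    rw [Finset.sum_sub_distrib, Finset.mul_sum, Finset.mul_sum]
  rw [hsumsplit] at hmain
  have hcsum : ∑ k ∈ Finset.range K, c k ≤ K * (ε ^ 2 / 16) := by
    calc ∑ k ∈ Finset.range K, c k ≤ ∑ k ∈ Finset.range K, (ε ^ 2 / 16) :=
          Finset.sum_le_sum (fun k hk => (hc k (Finset.mem_range.mp hk)).2)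
      _ = K * (ε ^ 2 / 16) := by rw [Finset.sum_const, Finset.card_range]; ring
  -- from hKlarge: 64 L n₀ (F0 - F*) ≤ K ε²
  have hKl : 64 * L * n₀ * (F 0 - Fstar) ≤ (K : ℝ) * ε ^ 2 := by
    have := (div_le_iff₀ (by positivity : (0:ℝ) < ε ^ 2)).mp hKlarge
    linarith
  have hbsum : ∑ k ∈ Finset.range K, b k ≤ (K : ℝ) * (ε ^ 2 / 4) := by
    have h1 : (1 / (8 * L * n₀)) * ∑ k ∈ Finset.range K, b k
        ≤ F 0 - Fstar + (1 / (4 * L * n₀)) * (K * (ε ^ 2 / 16)) := by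
      have hpos : (0:ℝ) < 1 / (4 * L * n₀) := by positivity
      nlinarith [mul_le_mul_of_nonneg_left hcsum hpos.le]
    have h2 : ∑ k ∈ Finset.range K, b k
        ≤ 8 * L * n₀ * (F 0 - Fstar) + 2 * (K * (ε ^ 2 / 16)) := by
      have := mul_le_mul_of_nonneg_left h1 (by positivity : (0:ℝ) ≤ 8 * L * n₀)
      have e1 : 8 * L * n₀ * ((1 / (8 * L * n₀)) * ∑ k ∈ Finset.range K, b k)
          = ∑ k ∈ Finset.range K, b k := by field_simp
      have e2 : 8 * L * n₀ * (1 / (4 * L * n₀) * (K * (ε ^ 2 / 16)))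
          = 2 * (K * (ε ^ 2 / 16)) := by field_simp; ring
      rw [e1, mul_add, e2] at this
      linarith
    nlinarith
  have hfirst : (1 / (K : ℝ)) * ∑ k ∈ Finset.range K, b k ≤ ε ^ 2 / 4 := by
    rw [div_mul_eq_mul_div, one_mul, div_le_iff₀ hKpos]
    linarith
  refine ⟨hfirst, ?_⟩
  have hsum2 : ∑ k ∈ Finset.range K, (2 * c k + 2 * b k)
      = 2 * ∑ k ∈ Finset.range K, c k + 2 * ∑ k ∈ Finset.range K, b k := by
    rw [Finset.sum_add_distrib, Finset.mul_sum, Finset.mul_sum]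
  rw [hsum2, div_mul_eq_mul_div, one_mul, div_le_iff₀ hKpos]
  nlinarith
end
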